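/- For every integer n ≥ 1 and every real number x, f_n(x) ∈ [−1, 1]. -/

import Mathlib

/-- The ±1 Thue–Morse sequence: `u n = (-1)^(s₂(n)+1)` where `s₂` is the binary digit sum. -/
def u (n : ℕ) : ℤ := (-1) ^ ((Nat.digits 2 n).sum + 1)

/-- The "Pascal triangle" associated to the Thue–Morse sequence:
`Sig k n` is `Σ^k_n` (k the superscript, n the subscript). -/
def Sig : ℕ → ℕ → ℤ
  | k, 0 => u k
  | 0, _ + 1 => 0
  | k + 1, n + 1 => Sig k n + Sig k (n + 1)

/-- The renormalized points `x^k_n = 2^{-(n-1)(n-2)/2} Σ^k_n`. -/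
noncomputable def xkn (n k : ℕ) : ℝ := (Sig k n : ℝ) / 2 ^ ((n - 1) * (n - 2) / 2)

/-- The piecewise linear interpolation `f n` of the points `x^k_n` at `k/2^{n-1}`,
vanishing on the nonpositive reals. -/
noncomputable def f (n : ℕ) (x : ℝ) : ℝ :=
  if x ≤ 0 then 0
  else
    xkn n ⌊(2 : ℝ) ^ (n - 1) * x⌋₊ +
      (2 : ℝ) ^ (n - 1) * (x - (⌊(2 : ℝ) ^ (n - 1) * x⌋₊ : ℝ) / 2 ^ (n - 1)) *
        (xkn n (⌊(2 : ℝ) ^ (n - 1) * x⌋₊ + 1) - xkn n ⌊(2 : ℝ) ^ (n - 1) * x⌋₊)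

/-!
Multiplying row `n` of the triangle by `X / (1 - X)` gives row `n + 1`, so the generating
function of row `n` is `X ^ n * (∏_{j<n} (1 - X ^ 2 ^ j) / (1 - X) ^ n) * U(X ^ 2 ^ n)`, where
`U = ∑ u_k X ^ k` satisfies `U(Y) = (1 - Y) * U(Y ^ 2)`. The middle factor is the polynomial
`∏_{j<n} (1 + X + ⋯ + X ^ (2 ^ j - 1))`: its degree is `< 2 ^ n` and its coefficients are
nonnegative and bounded by the product `2 ^ ((n - 1) * (n - 2) / 2)` of the lengths of all
factors but the last. As `U(X ^ 2 ^ n)` is supported on multiples of `2 ^ n` with coefficients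
`±1`, every coefficient of the product is, up to sign, a single coefficient of the polynomial.
Hence `|x^k_n| ≤ 1`, and `f n` interpolates linearly between such values.
-/

open PowerSeries Finset

lemma u_two_mul (k : ℕ) : u (2 * k) = u k := by
  rcases Nat.eq_zero_or_pos k with rfl | hk
  · rfl
  · rw [u, u, Nat.digits_def' (by norm_num) (by omega)]
    simp

lemma u_two_mul_add_one (k : ℕ) : u (2 * k + 1) = -u k := by
  rw [u, u, Nat.digits_def' (by norm_num) (by omega),
    show (2 * k + 1) % 2 = 1 by omega, show (2 * k + 1) / 2 = k by omega]
  simp [pow_succ, pow_add]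

lemma abs_u (k : ℕ) : |u k| = 1 := by
  simp [u]

/-- The generating function of `u` evaluated at `X ^ N`. -/
noncomputable def uSeries (N : ℕ) : ℤ⟦X⟧ := mk fun i => if N ∣ i then u (i / N) else 0

lemma coeff_uSeries_mul {N : ℕ} (hN : 0 < N) (q : ℕ) :
    coeff (N * q) (uSeries N) = u q := by
  simp [uSeries, hN.ne']

lemma coeff_uSeries_two_mul {N : ℕ} (hN : 0 < N) (q : ℕ) :
    coeff (N * q) (uSeries (2 * N)) = if 2 ∣ q then u (q / 2) else 0 := by
  simp only [uSeries, coeff_mk, mul_comm 2 N, Nat.mul_dvd_mul_iff_left hN,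
    Nat.mul_div_mul_left _ _ hN]

lemma uSeries_eq_mul {N : ℕ} (hN : 0 < N) : uSeries N = (1 - X ^ N) * uSeries (2 * N) := by
  ext i
  rw [sub_mul, one_mul, map_sub, coeff_X_pow_mul']
  by_cases hi : N ∣ i
  · obtain ⟨q, rfl⟩ := hi
    rw [coeff_uSeries_mul hN, coeff_uSeries_two_mul hN, ← Nat.mul_sub_one,
      coeff_uSeries_two_mul hN]
    simp only [le_mul_iff_one_le_right hN]
    rcases Nat.even_or_odd' q with ⟨m, rfl | rfl⟩
    · rcases m with _ | m
      · simp [u]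
      · simp [u_two_mul, show ¬ 2 ∣ 2 * (m + 1) - 1 by omega]
    · simp [u_two_mul_add_one, show ¬ 2 ∣ 2 * m + 1 by omega]
  · have h2 : ¬ 2 * N ∣ i := fun h => hi (dvd_trans (dvd_mul_left N 2) h)
    have h3 (hNi : N ≤ i) : ¬ 2 * N ∣ i - N := fun h =>
      hi ((Nat.dvd_sub_iff_left hNi dvd_rfl).1 (dvd_trans (dvd_mul_left N 2) h))
    simp +contextual [uSeries, hi, h2, h3]

noncomputable def geomSumProd (n : ℕ) : Polynomial ℕ :=
  ∏ j ∈ range n, ∑ i ∈ range (2 ^ j), Polynomial.X ^ i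

lemma geomSumProd_succ (n : ℕ) :
    geomSumProd (n + 1) = geomSumProd n * ∑ i ∈ range (2 ^ n), Polynomial.X ^ i :=
  prod_range_succ _ _

lemma natDegree_geomSumProd_lt (n : ℕ) : (geomSumProd n).natDegree < 2 ^ n := by
  induction n with
  | zero => simp [geomSumProd]
  | succ n ih =>
    have hsum :
        (∑ i ∈ range (2 ^ n), (Polynomial.X : Polynomial ℕ) ^ i).natDegree ≤ 2 ^ n - 1 :=
      Polynomial.natDegree_sum_le_of_forall_le _ _ fun i hi =>
        (Polynomial.natDegree_X_pow_le i).trans (Nat.le_sub_one_of_lt (mem_range.1 hi))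
    have hmul := Polynomial.natDegree_mul_le (p := geomSumProd n)
      (q := ∑ i ∈ range (2 ^ n), Polynomial.X ^ i)
    rw [geomSumProd_succ, pow_succ]
    omega

lemma coeff_mul_le_eval_one (p q : Polynomial ℕ) (hq : ∀ j, q.coeff j ≤ 1) (c : ℕ) :
    (p * q).coeff c ≤ p.eval 1 := by
  rw [Polynomial.coeff_mul, Polynomial.eval_eq_sum_range' (lt_max_of_lt_left (Nat.lt_succ_self _))]
  calc ∑ x ∈ antidiagonal c, p.coeff x.1 * q.coeff x.2
      ≤ ∑ x ∈ antidiagonal c, p.coeff x.1 :=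
        sum_le_sum fun x _ => mul_le_of_le_one_right' (hq x.2)
    _ = ∑ i ∈ range (c + 1), p.coeff i := Nat.sum_antidiagonal_eq_sum_range_succ_mk _ _
    _ ≤ _ := by
      simp only [one_pow, mul_one]
      exact sum_le_sum_of_subset (range_subset_range.2 (le_max_right _ _))

lemma eval_one_geomSumProd (n : ℕ) : (geomSumProd n).eval 1 = 2 ^ (n * (n - 1) / 2) := by
  simp only [geomSumProd, Polynomial.eval_prod, Polynomial.eval_finsetSum, Polynomial.eval_pow,
    Polynomial.eval_X, one_pow, sum_const, card_range, smul_eq_mul, mul_one]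
  rw [prod_pow_eq_pow_sum, sum_range_id]

lemma coeff_geomSumProd_le (n c : ℕ) :
    (geomSumProd n).coeff c ≤ 2 ^ ((n - 1) * (n - 2) / 2) := by
  rcases n with _ | n
  · rw [geomSumProd, prod_range_zero, Polynomial.coeff_one]
    split_ifs <;> simp
  · rw [geomSumProd_succ, show (n + 1 - 1) * (n + 1 - 2) = n * (n - 1) by
      rcases n with _ | n <;> simp, ← eval_one_geomSumProd]
    refine coeff_mul_le_eval_one _ _ (fun j => ?_) c
    simp only [Polynomial.finsetSum_coeff, Polynomial.coeff_X_pow, sum_ite_eq, mem_range]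
    split_ifs <;> simp

noncomputable def geomSumProdSeries (n : ℕ) : ℤ⟦X⟧ :=
  PowerSeries.map (Nat.castRingHom ℤ) (geomSumProd n : PowerSeries ℕ)

lemma coeff_geomSumProdSeries (n a : ℕ) :
    coeff a (geomSumProdSeries n) = (geomSumProd n).coeff a := by
  simp [geomSumProdSeries]

lemma geomSumProdSeries_succ (n : ℕ) :
    geomSumProdSeries (n + 1) = geomSumProdSeries n * ∑ i ∈ range (2 ^ n), X ^ i := by
  rw [geomSumProdSeries, geomSumProdSeries, geomSumProd_succ, Polynomial.coe_mul,
    ← Polynomial.coeToPowerSeries.ringHom_apply (φ := ∑ i ∈ _, _), map_sum]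
  simp

noncomputable def sigSeries (n : ℕ) : ℤ⟦X⟧ := mk fun k => Sig k n

lemma one_sub_X_mul_sigSeries_succ (n : ℕ) :
    (1 - X) * sigSeries (n + 1) = X * sigSeries n := by
  ext (_ | k) <;> simp [sub_mul, sigSeries, Sig, coeff_zero_eq_constantCoeff]

lemma sigSeries_eq (n : ℕ) :
    sigSeries n = X ^ n * geomSumProdSeries n * uSeries (2 ^ n) := by
  induction n with
  | zero => ext; simp [sigSeries, uSeries, geomSumProdSeries, geomSumProd, Sig]
  | succ n ih =>
    have h1X : (1 - X : ℤ⟦X⟧) ≠ 0 := fun h => by simpa using congrArg constantCoeff h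
    refine mul_left_cancel₀ h1X ?_
    rw [one_sub_X_mul_sigSeries_succ, ih, uSeries_eq_mul (by positivity),
      geomSumProdSeries_succ, ← mul_neg_geom_sum X (2 ^ n), pow_succ' 2 n]
    ring

lemma abs_coeff_mul_le {R : Type*} [CommRing R] [LinearOrder R] [IsStrictOrderedRing R]
    {P T : R⟦X⟧} {N : ℕ} {M : R}
    (hP : ∀ a, |coeff a P| ≤ M) (hPN : ∀ a, N ≤ a → coeff a P = 0)
    (hT : ∀ b, |coeff b T| ≤ 1) (hTN : ∀ b, ¬ N ∣ b → coeff b T = 0) (c : ℕ) :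
    |coeff c (P * T)| ≤ M := by
  have hmem : (c % N, c - c % N) ∈ antidiagonal c := by simp [Nat.mod_le]
  rw [coeff_mul, sum_eq_single_of_mem _ hmem fun ab hab hne => ?_, abs_mul]
  · exact (mul_le_of_le_one_right (abs_nonneg _) (hT _)).trans (hP _)
  · rw [HasAntidiagonal.mem_antidiagonal] at hab
    by_cases ha : N ≤ ab.1
    · rw [hPN _ ha, zero_mul]
    by_cases hb : N ∣ ab.2
    · obtain ⟨q, hq⟩ := hb
      have hmod : c % N = ab.1 := by
        rw [← hab, hq, Nat.add_mul_mod_self_left, Nat.mod_eq_of_lt (not_le.1 ha)]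
      exact absurd (Prod.ext hmod.symm (by omega)) hne
    · rw [hTN _ hb, mul_zero]

lemma abs_Sig_le (k n : ℕ) : |Sig k n| ≤ 2 ^ ((n - 1) * (n - 2) / 2) := by
  have hk : Sig k n = coeff k (sigSeries n) := by simp [sigSeries]
  rw [hk, sigSeries_eq, mul_assoc, coeff_X_pow_mul']
  split_ifs
  · refine abs_coeff_mul_le (N := 2 ^ n) (fun a => ?_) (fun a ha => ?_) (fun b => ?_)
      (fun b hb => ?_) _
    · rw [coeff_geomSumProdSeries, abs_of_nonneg (by positivity)]
      exact_mod_cast coeff_geomSumProd_le n a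
    · rw [coeff_geomSumProdSeries, Polynomial.coeff_eq_zero_of_natDegree_lt
        ((natDegree_geomSumProd_lt n).trans_le ha), Nat.cast_zero]
    · simp only [uSeries, coeff_mk]
      split_ifs <;> simp [abs_u]
    · simp [uSeries, hb]
  · simp

lemma abs_xkn_le_one (n k : ℕ) : |xkn n k| ≤ 1 := by
  rw [xkn, abs_div, abs_pow, abs_two, div_le_one (by positivity)]
  exact_mod_cast abs_Sig_le k n

theorem f_mem_Icc_general (n : ℕ) (x : ℝ) :
    f n x ∈ Set.Icc (-1 : ℝ) 1 := by
  unfold f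
  split_ifs with hx
  · norm_num
  set K := ⌊(2 : ℝ) ^ (n - 1) * x⌋₊
  have hδ : (2 : ℝ) ^ (n - 1) * (x - K / 2 ^ (n - 1)) ∈ Set.Icc 0 1 := by
    rw [mul_sub, mul_div_cancel₀ _ (by positivity)]
    exact ⟨sub_nonneg.2 (Nat.floor_le (mul_pos (by positivity) (not_le.1 hx)).le),
      by linarith [Nat.lt_floor_add_one ((2 : ℝ) ^ (n - 1) * x)]⟩
  exact (convex_Icc (-1 : ℝ) 1).add_smul_sub_mem (abs_le.1 (abs_xkn_le_one n K))
    (abs_le.1 (abs_xkn_le_one n (K + 1))) hδ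

theorem f_mem_Icc (n : ℕ) (hn : 1 ≤ n) (x : ℝ) :
    f n x ∈ Set.Icc (-1 : ℝ) 1 :=
  f_mem_Icc_general n x
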